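/- Let R_2 be the Leibniz algebra with basis {x, e_1, e_2, ...} and nonzero products [e_i, e_1] = e_{i+1} (i ≥ 2), [x, e_1] = -e_1 + e_2, [e_1, x] = e_1, [e_i, x] = (i-1)e_i (i ≥ 2), [x, x] = 0 (this is R_2(F,1,β) with all β_k = 0). Then R_2 satisfies the Leibniz identity and its center is trivial: any z with [z,w] = [w,z] = 0 for all w in R_2 must equal 0. -/

import Mathlib

/-!
Write `[f, g] = g₁ • T f + g₀ • A f + (f₀ g₁) • (e₂ - e₁)`. Every bracket has vanishing
`x`-coordinate and `e₁`-coordinate `g₀ f₁ - f₀ g₁`, so both sides of the Leibniz identity become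
linear combinations of `T`, `A` and their composites applied to `a`, `b`, `c`; they agree because
`A T - T A = T`, `A (e₂ - e₁) = e₂ - e₁` and `T (e₂ - e₁) = e₃`.

For the center: `[z, x] = A z`, and `A` is diagonal with nonzero eigenvalues on every `e_n`, so
`A z = 0` leaves only the `x`-coordinate, which is minus the `e₁`-coordinate of `[z, e₁]`.
-/

noncomputable section

/-- The underlying space; coordinate 0 is `x`, coordinate `n ≥ 1` is `e_n`. -/
abbrev V : Type := ℕ →₀ ℂ

/-- `e_i ↦ e_{i+1}` for `i ≥ 2`, all other basis vectors to 0. -/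
def T : V →ₗ[ℂ] V :=
  Finsupp.lsum ℂ fun n => if 2 ≤ n then (Finsupp.lsingle (n + 1) : ℂ →ₗ[ℂ] V) else 0

/-- Right multiplication by `x`: `e_1 ↦ e_1`, `e_i ↦ (i-1) e_i` for `i ≥ 2`, `x ↦ 0`. -/
def A : V →ₗ[ℂ] V :=
  Finsupp.lsum ℂ fun n =>
    (if n = 1 then (1 : ℂ) else if 2 ≤ n then (n : ℂ) - 1 else 0) • Finsupp.lsingle n

/-- Bracket of `R₂ = R₂(F,1,0)`: nonzero products `[e_i,e_1] = e_{i+1}` (i ≥ 2),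
`[x,e_1] = -e_1 + e_2`, `[e_1,x] = e_1`, `[e_i,x] = (i-1)e_i` (i ≥ 2), `[x,x] = 0`. -/
def brR2 (f g : V) : V :=
  g 1 • T f + g 0 • A f +
    (f 0 * g 1) • (Finsupp.single 2 (1 : ℂ) - Finsupp.single 1 (1 : ℂ))

def weightA (n : ℕ) : ℂ := if n = 1 then 1 else if 2 ≤ n then (n : ℂ) - 1 else 0

lemma weightA_ne_zero {n : ℕ} (hn : 1 ≤ n) : weightA n ≠ 0 := by
  unfold weightA
  split_ifs with h1 h2
  · exact one_ne_zero
  · rw [sub_ne_zero]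
    exact_mod_cast h1
  · omega

lemma T_single (n : ℕ) (c : ℂ) :
    T (Finsupp.single n c) = if 2 ≤ n then Finsupp.single (n + 1) c else 0 := by
  simp only [T, Finsupp.lsum_single]
  split <;> simp

lemma A_single (n : ℕ) (c : ℂ) : A (Finsupp.single n c) = Finsupp.single n (weightA n * c) := by
  rw [A, Finsupp.lsum_single, LinearMap.smul_apply, Finsupp.lsingle_apply, Finsupp.smul_single,
    smul_eq_mul, weightA]

lemma A_apply (f : V) (n : ℕ) : A f n = weightA n * f n := by
  induction f using Finsupp.induction_linear with
  | zero => simp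
  | add f g hf hg => simp [hf, hg, mul_add]
  | single m c =>
    rw [A_single]
    rcases eq_or_ne m n with rfl | h
    · simp
    · simp [h]

lemma T_apply_of_lt_three (f : V) {n : ℕ} (hn : n < 3) : T f n = 0 := by
  induction f using Finsupp.induction_linear with
  | zero => simp
  | add f g hf hg => simp [hf, hg]
  | single m c =>
    rw [T_single]
    split
    · rw [Finsupp.single_apply_eq_zero]
      omega
    · simp

lemma A_comp_T : A ∘ₗ T = T ∘ₗ A + T := by
  refine Finsupp.lhom_ext fun n c => ?_
  simp only [LinearMap.comp_apply, LinearMap.add_apply, T_single, A_single]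
  by_cases h : 2 ≤ n
  · simp only [if_pos h, A_single, weightA, if_neg (by omega : n + 1 ≠ 1),
      if_pos (by omega : 2 ≤ n + 1), if_neg (by omega : n ≠ 1), ← Finsupp.single_add,
      Nat.cast_add, Nat.cast_one]
    ring_nf
  · rcases (by omega : n = 0 ∨ n = 1) with rfl | rfl <;> simp

lemma A_T_apply (f : V) : A (T f) = T (A f) + T f :=
  LinearMap.congr_fun A_comp_T f

def e₂_sub_e₁ : V := Finsupp.single 2 1 - Finsupp.single 1 1

lemma brR2_eq (f g : V) : brR2 f g = g 1 • T f + g 0 • A f + (f 0 * g 1) • e₂_sub_e₁ := rfl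

lemma T_e₂_sub_e₁ : T e₂_sub_e₁ = Finsupp.single 3 1 := by
  simp [e₂_sub_e₁, T_single]

lemma A_e₂_sub_e₁ : A e₂_sub_e₁ = e₂_sub_e₁ := by
  simp only [e₂_sub_e₁, map_sub, A_single, weightA]
  norm_num

lemma brR2_apply_zero (f g : V) : brR2 f g 0 = 0 := by
  simp [brR2_eq, T_apply_of_lt_three f (by norm_num : 0 < 3), A_apply, weightA, e₂_sub_e₁]

lemma brR2_apply_one (f g : V) : brR2 f g 1 = g 0 * f 1 - f 0 * g 1 := by
  simp [brR2_eq, T_apply_of_lt_three f (by norm_num : 1 < 3), A_apply, weightA, e₂_sub_e₁]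
  ring

theorem brR2_leibniz (a b c : V) :
    brR2 a (brR2 b c) = brR2 (brR2 a b) c - brR2 (brR2 a c) b := by
  rw [brR2_eq a (brR2 b c), brR2_apply_zero, brR2_apply_one, brR2_eq (brR2 a b) c,
    brR2_apply_zero, brR2_eq (brR2 a c) b, brR2_apply_zero, brR2_eq a b, brR2_eq a c]
  simp only [map_add, map_smul, T_e₂_sub_e₁, A_e₂_sub_e₁, A_T_apply]
  module

lemma brR2_single_zero_right (f : V) : brR2 f (Finsupp.single 0 1) = A f := by
  simp [brR2_eq]

lemma apply_eq_zero_of_A_eq_zero {f : V} (hf : A f = 0) {n : ℕ} (hn : 1 ≤ n) : f n = 0 := by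
  have h := DFunLike.congr_fun hf n
  rw [A_apply, Finsupp.coe_zero, Pi.zero_apply] at h
  exact (mul_eq_zero.mp h).resolve_left (weightA_ne_zero hn)

lemma eq_zero_of_brR2_single_eq_zero {z : V} (hx : brR2 z (Finsupp.single 0 1) = 0)
    (he₁ : brR2 z (Finsupp.single 1 1) = 0) : z = 0 := by
  rw [brR2_single_zero_right] at hx
  ext n
  rcases Nat.eq_zero_or_pos n with rfl | hn
  · simpa [brR2_apply_one] using DFunLike.congr_fun he₁ 1
  · exact apply_eq_zero_of_A_eq_zero hx hn

/-- `R₂(F,1,0)` satisfies the Leibniz identity and has trivial center. -/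
theorem stmt19 :
    (∀ a b c : V, brR2 a (brR2 b c) = brR2 (brR2 a b) c - brR2 (brR2 a c) b) ∧
    (∀ z : V, (∀ w : V, brR2 z w = 0 ∧ brR2 w z = 0) → z = 0) :=
  ⟨brR2_leibniz, fun _ hz => eq_zero_of_brR2_single_eq_zero (hz _).1 (hz _).1⟩
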